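/- Let S be a finite set with |S| = B̂ and B ≤ B̂, let f : S → ℝ be an injective function, and let g : Ω × S → ℝ be a family of random losses on a probability space (Ω, μ) such that for almost every ω the map g(ω, ·) : S → ℝ is injective. Let T_f be the Top-B subset of S under f, let T_g(ω) be the Top-B subset under g(ω, ·), and let m(ω) = |T_f △ T_g(ω)|. Then E[m] ≤ 2 · ∑_{(i,j): i ∈ T_f, j ∈ S \ T_f} μ({ω : the pair (i, j) is order-flipped between f and g(ω, ·)}). -/

import Mathlib

/-!
On the event where `g ω` ranks its Top-B set `T'` correctly, `T_f` and `T'` have the same size,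
so `|T_f △ T'| = 2k` with `k = |T_f \ T'| = |T' \ T_f|`. Every pair `(i, j)` with `i ∈ T_f \ T'`
and `j ∈ T' \ T_f` is a cross-pair on which `f` and `g ω` disagree, so at least `k² ≥ k`
cross-pairs are order-flipped. Integrating the pointwise bound `m ≤ 2 · #{flipped cross-pairs}`
gives the theorem; the flip events need not be measurable, so they are replaced by measurable
hulls of the same measure.
-/

open MeasureTheory Finset Classical

def OrderFlipped {α : Type*} (f g : α → ℝ) (i j : α) : Prop :=
  (f i - f j < 0 ∧ 0 ≤ g i - g j) ∨ (g i - g j < 0 ∧ 0 ≤ f i - f j)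

lemma Finset.card_symmDiff_of_card_eq {α : Type*} [DecidableEq α] {s t : Finset α}
    (h : #s = #t) : #(symmDiff s t) = 2 * #(s \ t) := by
  rw [symmDiff_def, sup_eq_union, card_union_of_disjoint disjoint_sdiff_sdiff,
    card_sdiff_comm h.symm, two_mul]

section TopSubsets

variable {α : Type*} [DecidableEq α] {S T T' : Finset α} {f g : α → ℝ}

lemma orderFlipped_of_mem_sdiff (hTS : T ⊆ S) (hT'S : T' ⊆ S)
    (hT : ∀ i ∈ T, ∀ j ∈ S \ T, f j < f i) (hT' : ∀ i ∈ T', ∀ j ∈ S \ T', g j < g i)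
    {i j : α} (hi : i ∈ T \ T') (hj : j ∈ T' \ T) : OrderFlipped f g i j := by
  rw [mem_sdiff] at hi hj
  have hf : f j < f i := hT i hi.1 j (mem_sdiff.2 ⟨hT'S hj.1, hj.2⟩)
  have hg : g i < g j := hT' j hj.1 i (mem_sdiff.2 ⟨hTS hi.1, hi.2⟩)
  exact Or.inr ⟨by linarith, by linarith⟩

lemma sdiff_product_sdiff_subset_filter_orderFlipped (hTS : T ⊆ S) (hT'S : T' ⊆ S)
    (hT : ∀ i ∈ T, ∀ j ∈ S \ T, f j < f i) (hT' : ∀ i ∈ T', ∀ j ∈ S \ T', g j < g i) :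
    (T \ T') ×ˢ (T' \ T) ⊆ (T ×ˢ (S \ T)).filter fun p => OrderFlipped f g p.1 p.2 := by
  rintro ⟨i, j⟩ hij
  rw [mem_product] at hij
  obtain ⟨hi, hj⟩ := hij
  refine mem_filter.2 ⟨mem_product.2 ⟨(mem_sdiff.1 hi).1, ?_⟩,
    orderFlipped_of_mem_sdiff hTS hT'S hT hT' hi hj⟩
  exact mem_sdiff.2 ⟨hT'S (mem_sdiff.1 hj).1, (mem_sdiff.1 hj).2⟩

theorem card_symmDiff_le_two_mul_card_orderFlipped (hTS : T ⊆ S) (hT'S : T' ⊆ S)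
    (hcard : #T = #T') (hT : ∀ i ∈ T, ∀ j ∈ S \ T, f j < f i)
    (hT' : ∀ i ∈ T', ∀ j ∈ S \ T', g j < g i) :
    #(symmDiff T T') ≤ 2 * #((T ×ˢ (S \ T)).filter fun p => OrderFlipped f g p.1 p.2) := by
  rw [card_symmDiff_of_card_eq hcard]
  calc 2 * #(T \ T') ≤ 2 * (#(T \ T') * #(T' \ T)) := by
        rw [card_sdiff_comm hcard]; exact Nat.mul_le_mul_left 2 (Nat.le_mul_self _)
    _ = 2 * #((T \ T') ×ˢ (T' \ T)) := by rw [card_product]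
    _ ≤ _ := Nat.mul_le_mul_left 2
        (card_le_card (sdiff_product_sdiff_subset_filter_orderFlipped hTS hT'S hT hT'))

end TopSubsets

lemma integral_le_mul_sum_measureReal_of_le_card {Ω ι : Type*} [MeasurableSpace Ω]
    {μ : Measure Ω} [IsFiniteMeasure μ] {X : Ω → ℝ} {P : Finset ι} {A : ι → Set Ω} {c : ℝ}
    (hc : 0 ≤ c) (hX₀ : 0 ≤ᵐ[μ] X) (hX : ∀ᵐ ω ∂μ, X ω ≤ c * #(P.filter fun p => ω ∈ A p)) :
    ∫ ω, X ω ∂μ ≤ c * ∑ p ∈ P, μ.real (A p) := by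
  set A' : ι → Set Ω := fun p => toMeasurable μ (A p)
  have hcount (ω : Ω) : (#(P.filter fun p => ω ∈ A p) : ℝ) ≤ ∑ p ∈ P, (A' p).indicator 1 ω := by
    rw [natCast_card_filter]
    refine sum_le_sum fun p _ => ?_
    calc (if ω ∈ A p then (1 : ℝ) else 0) = (A p).indicator 1 ω := by simp [Set.indicator_apply]
      _ ≤ (A' p).indicator 1 ω :=
        Set.indicator_le_indicator_of_subset (subset_toMeasurable μ _) (fun _ => zero_le_one) ω
  have hint : Integrable (fun ω => c * ∑ p ∈ P, (A' p).indicator (1 : Ω → ℝ) ω) μ :=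
    (integrable_finsetSum _ fun p _ =>
      (integrable_const 1).indicator (measurableSet_toMeasurable μ _)).const_mul c
  calc ∫ ω, X ω ∂μ ≤ ∫ ω, c * ∑ p ∈ P, (A' p).indicator 1 ω ∂μ :=
        integral_mono_of_nonneg hX₀ hint
          (hX.mono fun ω hω => hω.trans (mul_le_mul_of_nonneg_left (hcount ω) hc))
    _ = c * ∑ p ∈ P, μ.real (A p) := by
        rw [integral_const_mul, integral_finsetSum _ fun p _ =>
          (integrable_const 1).indicator (measurableSet_toMeasurable μ _)]
        simp only [A', integral_indicator_one (measurableSet_toMeasurable μ _),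
          measureReal_def, measure_toMeasurable]

theorem expected_misranked_subset_bound_general
    {α Ω : Type*} [DecidableEq α] [MeasurableSpace Ω]
    (μ : Measure Ω) [IsProbabilityMeasure μ]
    (S : Finset α) (B : ℕ)
    (f : α → ℝ)
    (g : Ω → α → ℝ)
    (Tf : Finset α) (hTfS : Tf ⊆ S) (hTfcard : Tf.card = B)
    (hTfTop : ∀ i ∈ Tf, ∀ j ∈ S \ Tf, f j < f i)
    (Tg : Ω → Finset α) (hTgS : ∀ ω, Tg ω ⊆ S) (hTgcard : ∀ ω, (Tg ω).card = B)
    (hTgTop : ∀ᵐ ω ∂μ, ∀ i ∈ Tg ω, ∀ j ∈ S \ Tg ω, g ω j < g ω i)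
    (m : Ω → ℕ) (hm : ∀ ω, m ω = (symmDiff Tf (Tg ω)).card) :
    ∫ ω, (m ω : ℝ) ∂μ ≤ 2 * ∑ p ∈ Tf ×ˢ (S \ Tf),
      (μ {ω | (f p.1 - f p.2 < 0 ∧ 0 ≤ g ω p.1 - g ω p.2) ∨
              (g ω p.1 - g ω p.2 < 0 ∧ 0 ≤ f p.1 - f p.2)}).toReal := by
  change _ ≤ 2 * ∑ p ∈ Tf ×ˢ (S \ Tf), μ.real {ω | OrderFlipped f (g ω) p.1 p.2}
  refine integral_le_mul_sum_measureReal_of_le_card zero_le_two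
    (ae_of_all _ fun ω => Nat.cast_nonneg _) ?_
  filter_upwards [hTgTop] with ω hTop
  rw [hm]
  exact_mod_cast card_symmDiff_le_two_mul_card_orderFlipped (g := g ω) hTfS (hTgS ω)
    (hTfcard.trans (hTgcard ω).symm) hTfTop hTop

/-- Lemma 1 combined with linearity of expectation: the expected number of tasks that change
Top-B membership after a model update is bounded by twice the sum over cross-pairs of their
flip probabilities. -/
theorem expected_misranked_subset_bound
    {α Ω : Type*} [DecidableEq α] [MeasurableSpace Ω]
    (μ : Measure Ω) [IsProbabilityMeasure μ]
    (S : Finset α) (Bhat B : ℕ) (hS : S.card = Bhat) (hB : B ≤ Bhat)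
    (f : α → ℝ) (hf : Set.InjOn f ↑S)
    (g : Ω → α → ℝ) (hg : ∀ᵐ ω ∂μ, Set.InjOn (g ω) ↑S)
    (Tf : Finset α) (hTfS : Tf ⊆ S) (hTfcard : Tf.card = B)
    (hTfTop : ∀ i ∈ Tf, ∀ j ∈ S \ Tf, f j < f i)
    (Tg : Ω → Finset α) (hTgS : ∀ ω, Tg ω ⊆ S) (hTgcard : ∀ ω, (Tg ω).card = B)
    (hTgTop : ∀ᵐ ω ∂μ, ∀ i ∈ Tg ω, ∀ j ∈ S \ Tg ω, g ω j < g ω i)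
    (m : Ω → ℕ) (hm : ∀ ω, m ω = (symmDiff Tf (Tg ω)).card) :
    ∫ ω, (m ω : ℝ) ∂μ ≤ 2 * ∑ p ∈ Tf ×ˢ (S \ Tf),
      (μ {ω | (f p.1 - f p.2 < 0 ∧ 0 ≤ g ω p.1 - g ω p.2) ∨
              (g ω p.1 - g ω p.2 < 0 ∧ 0 ≤ f p.1 - f p.2)}).toReal :=
  expected_misranked_subset_bound_general μ S B f g Tf hTfS hTfcard hTfTop Tg hTgS hTgcard hTgTop m
    hm
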